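/- arXiv:2410.22031 — 4 statements merged into one kernel-verified Lean document; each statement's English description precedes it below -/
import Mathlib

section
/- For real numbers $x_a > 0$, $y_0 > 0$, and $y_a > y_b$, the inequality $(x_a^2 + (y_b - y_0)^2)^{3/2} + (x_a^2 + y_a^2)^{3/2} > (x_a^2 + (y_a - y_0)^2)^{3/2} + (x_a^2 + y_b^2)^{3/2}$ holds. -/
/-! The map `f y = (c + y²)^{3/2}` with `c = xa² ≥ 0` has derivative `3 y √(c + y²)`, which is
strictly increasing, so `f` is strictly convex and its increments `f y - f (y - y0)` over a fixed
step `y0 > 0` strictly increase with `y`; comparing them at `yb < ya` is the inequality. -/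

open Real

lemma strictMono_sub_comp_sub_of_hasDerivAt {f f' : ℝ → ℝ} (hf : ∀ y, HasDerivAt f (f' y) y)
    (hf' : StrictMono f') {h : ℝ} (hh : 0 < h) : StrictMono fun y => f y - f (y - h) := by
  refine strictMono_of_deriv_pos fun y => ?_
  have hd : HasDerivAt (fun y => f y - f (y - h)) (f' y - f' (y - h) * 1) y :=
    (hf y).sub ((hf (y - h)).comp y ((hasDerivAt_id y).sub_const h))
  rw [hd.deriv, mul_one, sub_pos]
  exact hf' (by linarith)

lemma strictMono_mul_sqrt_add_sq {c : ℝ} (hc : 0 ≤ c) : StrictMono fun y => y * √(c + y ^ 2) := by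
  refine strictMono_of_odd_strictMonoOn_nonneg (fun y => by simp only [neg_sq, neg_mul])
    fun y hy z _ hyz => ?_
  have hsq : y ^ 2 < z ^ 2 := pow_lt_pow_left₀ hyz hy two_ne_zero
  exact mul_lt_mul'' hyz (sqrt_lt_sqrt (by positivity) (by linarith)) hy (sqrt_nonneg _)

lemma hasDerivAt_sqrt_add_sq_pow_three {c : ℝ} (hc : 0 ≤ c) (y : ℝ) :
    HasDerivAt (fun t => √(c + t ^ 2) ^ 3) (3 * (y * √(c + y ^ 2))) y := by
  -- Through `rpow` with exponent `3/2 ≥ 1` the chain rule also applies where `c + y² = 0`.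
  have hpow (t : ℝ) : √(c + t ^ 2) ^ 3 = (c + t ^ 2) ^ (3 / 2 : ℝ) := by
    rw [sqrt_eq_rpow, ← rpow_mul_natCast (by positivity)]
    norm_num
  have hd := ((hasDerivAt_pow 2 y).const_add c).rpow_const (p := 3 / 2) (Or.inr (by norm_num))
  simp only [hpow]
  convert hd using 1
  rw [sqrt_eq_rpow, show (3 / 2 : ℝ) - 1 = 1 / 2 by norm_num]
  ring

theorem stmt_2_general (xa y0 ya yb : ℝ) (hy0 : 0 < y0) (hab : yb < ya) :
    (Real.sqrt (xa ^ 2 + (ya - y0) ^ 2)) ^ 3 + (Real.sqrt (xa ^ 2 + yb ^ 2)) ^ 3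
      < (Real.sqrt (xa ^ 2 + (yb - y0) ^ 2)) ^ 3 + (Real.sqrt (xa ^ 2 + ya ^ 2)) ^ 3 := by
  have hc : 0 ≤ xa ^ 2 := sq_nonneg xa
  have key := strictMono_sub_comp_sub_of_hasDerivAt (hasDerivAt_sqrt_add_sq_pow_three hc)
    ((strictMono_mul_sqrt_add_sq hc).const_mul (by norm_num : (0 : ℝ) < 3)) hy0 hab
  dsimp only at key
  linarith

theorem stmt_2 (xa y0 ya yb : ℝ) (hxa : 0 < xa) (hy0 : 0 < y0) (hab : yb < ya) :
    (Real.sqrt (xa ^ 2 + (ya - y0) ^ 2)) ^ 3 + (Real.sqrt (xa ^ 2 + yb ^ 2)) ^ 3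
      < (Real.sqrt (xa ^ 2 + (yb - y0) ^ 2)) ^ 3 + (Real.sqrt (xa ^ 2 + ya ^ 2)) ^ 3 :=
  stmt_2_general xa y0 ya yb hy0 hab
end

section
/- In a trapezoid $P_a P_b P_b' P_a'$ in the Euclidean plane with parallel bases $P_a P_b$ and $P_a' P_b'$ (bases lying on two distinct parallel lines, with $P_a, P_a'$ on the same side), the sum of the cubes of the diagonals strictly exceeds the sum of the cubes of the legs: $|P_a P_b'|^3 + |P_b P_a'|^3 > |P_a P_a'|^3 + |P_b P_b'|^3$. -/
/-!
If the bases of the trapezoid are `a - b = s • v` and `a' - b' = t • v` with `s, t > 0`, then the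
legs `a - a'` and `b - b'` are the convex combinations of the diagonals `a - b'` and `b - a'` with
the weights `(s, t) / (s + t)` and `(t, s) / (s + t)` respectively. Since `x ↦ ‖x‖ ^ 3` is strictly
convex, Jensen's inequality for each leg, summed, gives the claim.
-/

open Set

lemma StrictConvexOn.map_combo_add_map_combo_lt {𝕜 E β : Type*} [Field 𝕜] [LinearOrder 𝕜]
    [IsStrictOrderedRing 𝕜] [AddCommGroup E] [Module 𝕜 E] [AddCommGroup β] [PartialOrder β]
    [IsOrderedAddMonoid β] [Module 𝕜 β] {s : Set E} {f : E → β} (hf : StrictConvexOn 𝕜 s f)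
    {x y : E} (hx : x ∈ s) (hy : y ∈ s) (hxy : x ≠ y) {a b : 𝕜} (ha : 0 < a) (hb : 0 < b)
    (hab : a + b = 1) :
    f (a • x + b • y) + f (b • x + a • y) < f x + f y :=
  calc f (a • x + b • y) + f (b • x + a • y)
      < (a • f x + b • f y) + (b • f x + a • f y) :=
        add_lt_add (hf.2 hx hy hxy ha hb hab) (hf.2 hx hy hxy hb ha (by rwa [add_comm]))
    _ = f x + f y := by
        rw [add_add_add_comm, ← add_smul, add_comm (b • f y), ← add_smul, hab, one_smul, one_smul]

lemma strictConvexOn_norm_pow {E : Type*} [NormedAddCommGroup E] [NormedSpace ℝ E]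
    [StrictConvexSpace ℝ E] {n : ℕ} (hn : 2 ≤ n) :
    StrictConvexOn ℝ univ fun x : E ↦ ‖x‖ ^ n := by
  refine ⟨convex_univ, fun x _ y _ hxy a b ha hb hab ↦ ?_⟩
  simp only [smul_eq_mul]
  by_cases hnorm : ‖x‖ = ‖y‖
  · have hlt : ‖a • x + b • y‖ < ‖y‖ := norm_combo_lt_of_ne hnorm.le le_rfl hxy ha hb hab
    calc ‖a • x + b • y‖ ^ n < ‖y‖ ^ n := pow_lt_pow_left₀ hlt (norm_nonneg _) (by omega)
      _ = a * ‖x‖ ^ n + b * ‖y‖ ^ n := by rw [hnorm, ← add_mul, hab, one_mul]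
  · calc ‖a • x + b • y‖ ^ n ≤ (a * ‖x‖ + b * ‖y‖) ^ n := by
          gcongr
          calc ‖a • x + b • y‖ ≤ ‖a • x‖ + ‖b • y‖ := norm_add_le _ _
            _ = a * ‖x‖ + b * ‖y‖ := by
                rw [norm_smul, norm_smul, Real.norm_of_nonneg ha.le, Real.norm_of_nonneg hb.le]
      _ < a * ‖x‖ ^ n + b * ‖y‖ ^ n :=
          (strictConvexOn_pow hn).2 (norm_nonneg x) (norm_nonneg y) hnorm ha hb hab

theorem dist_pow_add_dist_pow_lt_of_trapezoid {E : Type*} [NormedAddCommGroup E]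
    [NormedSpace ℝ E] [StrictConvexSpace ℝ E] {n : ℕ} (hn : 2 ≤ n) {a b a' b' v : E} {s t : ℝ}
    (hs : 0 < s) (ht : 0 < t) (hv : v ≠ 0) (hbase : a - b = s • v) (hbase' : a' - b' = t • v) :
    dist a a' ^ n + dist b b' ^ n < dist a b' ^ n + dist b a' ^ n := by
  obtain rfl : a = b + s • v := by rw [← hbase]; abel
  obtain rfl : a' = b' + t • v := by rw [← hbase']; abel
  have hst : 0 < s + t := add_pos hs ht
  have hdiag : b + s • v - b' ≠ b - (b' + t • v) := by
    intro h
    have : (s + t) • v = 0 := by rw [add_smul, ← sub_eq_zero.mpr h]; abel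
    exact hv ((smul_eq_zero.mp this).resolve_left hst.ne')
  have hw : s / (s + t) + t / (s + t) = 1 := by field_simp
  have hv1 : s / (s + t) * s - t / (s + t) * t = s - t := by field_simp; ring
  have hv2 : t / (s + t) * s - s / (s + t) * t = 0 := by field_simp; ring
  have key := (strictConvexOn_norm_pow (E := E) hn).map_combo_add_map_combo_lt trivial trivial hdiag
    (div_pos hs hst) (div_pos ht hst) hw
  have hleg : b + s • v - (b' + t • v)
      = (s / (s + t)) • (b + s • v - b') + (t / (s + t)) • (b - (b' + t • v)) := by
    linear_combination (norm := module) hw.symm • (b - b') + hv1.symm • v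
  have hleg' : b - b'
      = (t / (s + t)) • (b + s • v - b') + (s / (s + t)) • (b - (b' + t • v)) := by
    linear_combination (norm := module) hw.symm • (b - b') + hv2.symm • v
  simpa only [dist_eq_norm, hleg, ← hleg'] using key

theorem stmt_3_general (xa y0 ya yb : ℝ) (hy0 : 0 < y0) (hab : yb < ya) :
    let Pa : EuclideanSpace ℝ (Fin 2) := (!₂[0, ya] : EuclideanSpace ℝ (Fin 2))
    let Pb : EuclideanSpace ℝ (Fin 2) := (!₂[0, yb] : EuclideanSpace ℝ (Fin 2))
    let Pa' : EuclideanSpace ℝ (Fin 2) := (!₂[xa, y0] : EuclideanSpace ℝ (Fin 2))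
    let Pb' : EuclideanSpace ℝ (Fin 2) := (!₂[xa, 0] : EuclideanSpace ℝ (Fin 2))
    dist Pa Pa' ^ 3 + dist Pb Pb' ^ 3 < dist Pa Pb' ^ 3 + dist Pb Pa' ^ 3 := by
  intro Pa Pb Pa' Pb'
  have hv : (!₂[0, 1] : EuclideanSpace ℝ (Fin 2)) ≠ 0 := by
    intro h
    simpa using congrArg (· 1) h
  refine dist_pow_add_dist_pow_lt_of_trapezoid (by norm_num) (sub_pos.mpr hab) hy0 hv ?_ ?_
  · ext i; fin_cases i <;> simp [Pa, Pb]
  · ext i; fin_cases i <;> simp [Pa', Pb']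

theorem stmt_3 (xa y0 ya yb : ℝ) (hxa : 0 < xa) (hy0 : 0 < y0) (hab : yb < ya) :
    let Pa : EuclideanSpace ℝ (Fin 2) := (!₂[0, ya] : EuclideanSpace ℝ (Fin 2))
    let Pb : EuclideanSpace ℝ (Fin 2) := (!₂[0, yb] : EuclideanSpace ℝ (Fin 2))
    let Pa' : EuclideanSpace ℝ (Fin 2) := (!₂[xa, y0] : EuclideanSpace ℝ (Fin 2))
    let Pb' : EuclideanSpace ℝ (Fin 2) := (!₂[xa, 0] : EuclideanSpace ℝ (Fin 2))
    dist Pa Pa' ^ 3 + dist Pb Pb' ^ 3 < dist Pa Pb' ^ 3 + dist Pb Pa' ^ 3 :=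
  stmt_3_general xa y0 ya yb hy0 hab
end

section
/- Let $\gamma : [s_0, s_f] \to \mathbb{R}^2$ be a curve, $n : [s_0,s_f] \to \mathbb{R}^2$ a map with $n(s) \neq 0$ for all $s$, and $r : [s_0,s_f] \times \{0, \pi\} \to \mathbb{R}$ with $r(s, \theta) > 0$. Define the trajectory position $p(s, \theta, \lambda_{init}) = \gamma(s) + \lambda(s, \theta, \lambda_{init}) r(s, \theta) n(s) \cos\theta$ where $\lambda(s, \theta, \lambda_{init}) = 1 - \frac{(1-\lambda_{init}) r(s_0, \theta)(r(s,0) + r(s,\pi))}{r(s,\theta)(r(s_0,0) + r(s_0,\pi))}$. Then for any $s$, $\theta_1, \theta_2 \in \{0, \pi\}$, $\lambda_1, \lambda_2 \in [0,1]$, if either ($\theta_1 = \theta_2$ and $\lambda_1 \neq \lambda_2$) or ($\theta_1 \neq \theta_2$ and $|\lambda_1| + |\lambda_2| \neq 0$), then $p(s, \theta_1, \lambda_1) \neq p(s, \theta_2, \lambda_2)$. -/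
/-!
Since `n s ≠ 0`, equal positions force equal coefficients of `n s`. With
`k = (r(s,0) + r(s,π)) / (r(s₀,0) + r(s₀,π)) > 0`, the coefficient on side `θ = 0` is affine in `λ`
with slope `k r(s₀,0)`, on side `θ = π` with slope `-k r(s₀,π)`, and the coefficient at `(0, λ₁)`
exceeds the one at `(π, λ₂)` by `k (λ₁ r(s₀,0) + λ₂ r(s₀,π))`, which vanishes only for `λ₁ = λ₂ = 0`.
-/

open Real

/-- The coefficient `λ(s, θ, l) r(s, θ) cos θ` of `n s` in the trajectory position `p(s, θ, l)`. -/
noncomputable def trajOffset (r : ℝ → ℝ → ℝ) (s0 s θ l : ℝ) : ℝ :=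
  (1 - (1 - l) * r s0 θ * (r s 0 + r s π) / (r s θ * (r s0 0 + r s0 π))) * r s θ * cos θ

namespace trajOffset

variable {r : ℝ → ℝ → ℝ} {s0 s : ℝ}

theorem zero_sub_zero (h : r s 0 ≠ 0) (l1 l2 : ℝ) :
    trajOffset r s0 s 0 l1 - trajOffset r s0 s 0 l2 =
      (r s 0 + r s π) / (r s0 0 + r s0 π) * r s0 0 * (l1 - l2) := by
  simp only [trajOffset, cos_zero]
  field_simp
  ring

theorem pi_sub_pi (h : r s π ≠ 0) (l1 l2 : ℝ) :
    trajOffset r s0 s π l1 - trajOffset r s0 s π l2 =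
      (r s 0 + r s π) / (r s0 0 + r s0 π) * r s0 π * (l2 - l1) := by
  simp only [trajOffset, cos_pi]
  field_simp
  ring

theorem zero_sub_pi (h0 : r s 0 ≠ 0) (hπ : r s π ≠ 0) (h : r s0 0 + r s0 π ≠ 0) (l1 l2 : ℝ) :
    trajOffset r s0 s 0 l1 - trajOffset r s0 s π l2 =
      (r s 0 + r s π) / (r s0 0 + r s0 π) * (l1 * r s0 0 + l2 * r s0 π) := by
  simp only [trajOffset, cos_zero, cos_pi]
  field_simp
  ring

end trajOffset

theorem mul_add_mul_pos_of_abs_add_abs_ne_zero {l1 l2 a b : ℝ} (hl1 : 0 ≤ l1) (hl2 : 0 ≤ l2)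
    (ha : 0 < a) (hb : 0 < b) (h : |l1| + |l2| ≠ 0) : 0 < l1 * a + l2 * b := by
  rw [abs_of_nonneg hl1, abs_of_nonneg hl2] at h
  rcases hl1.lt_or_eq with hl1 | rfl
  · positivity
  · have : 0 < l2 := lt_of_le_of_ne hl2 (by simpa [eq_comm] using h)
    positivity

theorem stmt_7 (s0 sf : ℝ)
    (γ n : ℝ → EuclideanSpace ℝ (Fin 2)) (r : ℝ → ℝ → ℝ)
    (hn : ∀ s ∈ Set.Icc s0 sf, n s ≠ 0)
    (hr : ∀ s ∈ Set.Icc s0 sf, ∀ θ ∈ ({0, Real.pi} : Set ℝ), 0 < r s θ)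
    (lam : ℝ → ℝ → ℝ → ℝ)
    (hlam : ∀ s θ li, lam s θ li =
      1 - (1 - li) * r s0 θ * (r s 0 + r s Real.pi)
        / (r s θ * (r s0 0 + r s0 Real.pi)))
    (p : ℝ → ℝ → ℝ → EuclideanSpace ℝ (Fin 2))
    (hp : ∀ s θ li, p s θ li =
      γ s + (lam s θ li * r s θ * Real.cos θ) • n s) :
    ∀ s ∈ Set.Icc s0 sf,
      ∀ θ1 ∈ ({0, Real.pi} : Set ℝ), ∀ θ2 ∈ ({0, Real.pi} : Set ℝ),
      ∀ l1 ∈ Set.Icc (0 : ℝ) 1, ∀ l2 ∈ Set.Icc (0 : ℝ) 1,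
        ((θ1 = θ2 ∧ l1 ≠ l2) ∨ (θ1 ≠ θ2 ∧ |l1| + |l2| ≠ 0)) →
          p s θ1 l1 ≠ p s θ2 l2 := by
  intro s hs θ1 hθ1 θ2 hθ2 l1 hl1 l2 hl2 hcond heq
  have hs0 : s0 ∈ Set.Icc s0 sf := ⟨le_rfl, hs.1.trans hs.2⟩
  have ha := hr s0 hs0 0 (by simp)
  have hb := hr s0 hs0 π (by simp)
  have hA := hr s hs 0 (by simp)
  have hB := hr s hs π (by simp)
  have hk : 0 < (r s 0 + r s π) / (r s0 0 + r s0 π) := by positivity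
  have hoff : trajOffset r s0 s θ1 l1 - trajOffset r s0 s θ2 l2 = 0 := by
    rw [hp, hp, hlam, hlam] at heq
    exact sub_eq_zero.2 (smul_left_injective ℝ (hn s hs) (add_left_cancel heq))
  rcases hθ1 with rfl | rfl <;> rcases hθ2 with rfl | rfl
  · rw [trajOffset.zero_sub_zero hA.ne'] at hoff
    have hl : l1 ≠ l2 := hcond.elim And.right fun h => absurd rfl h.1
    exact hl (by simpa [hk.ne', ha.ne', sub_eq_zero] using hoff)
  · rw [trajOffset.zero_sub_pi hA.ne' hB.ne' (by positivity)] at hoff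
    have hl := mul_add_mul_pos_of_abs_add_abs_ne_zero hl1.1 hl2.1 ha hb
      (hcond.elim (fun h => absurd h.1 pi_ne_zero.symm) And.right)
    exact (mul_pos hk hl).ne' hoff
  · rw [← neg_eq_zero, neg_sub, trajOffset.zero_sub_pi hA.ne' hB.ne' (by positivity)] at hoff
    have hl := mul_add_mul_pos_of_abs_add_abs_ne_zero hl2.1 hl1.1 ha hb
      (hcond.elim (fun h => absurd h.1 pi_ne_zero) fun h => add_comm |l1| |l2| ▸ h.2)
    exact (mul_pos hk hl).ne' hoff
  · rw [trajOffset.pi_sub_pi hB.ne'] at hoff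
    have hl : l1 ≠ l2 := hcond.elim And.right fun h => absurd rfl h.1
    exact hl (by simpa [hk.ne', hb.ne', sub_eq_zero, eq_comm] using hoff)
end

section
/- With the trapezoid setup $P_a = (0, y_a)$, $P_b = (0, y_b)$, $P_a' = (x_a, y_0)$, $P_b' = (x_a, 0)$ where $x_a > 0$, $y_0 > 0$, $y_a > y_b$, and with energy $E(\xi_a, \xi_b) = C(\|\xi_a\|^3 + \|\xi_b\|^3)$ for any constant $C > 0$: the non-crossing assignment ($\xi_a = P_a' - P_a$, $\xi_b = P_b' - P_b$) has strictly smaller energy than the crossing assignment ($\xi_a = P_b' - P_a$, $\xi_b = P_a' - P_b$). -/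
/-!
Every displacement goes from the line `x = 0` to the line `x = xa`, so its cubed length is
`F t = (t ^ 2 + xa ^ 2) ^ (3 / 2)` for its vertical offset `±t`. The offsets `ya`, `yb - y0` of
the crossing assignment strictly enclose the offsets `yb`, `ya - y0` of the non-crossing one and
have the same sum, so strict convexity of `F` makes the crossing energy strictly larger.
-/

open Set

theorem StrictConvexOn.map_add_map_lt_of_add_eq {𝕜 β : Type*} [Field 𝕜] [LinearOrder 𝕜]
    [IsStrictOrderedRing 𝕜] [AddCommMonoid β] [PartialOrder β] [IsOrderedCancelAddMonoid β]
    [Module 𝕜 β] {s : Set 𝕜} {f : 𝕜 → β} (hf : StrictConvexOn 𝕜 s f) {x y p q : 𝕜}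
    (hx : x ∈ s) (hy : y ∈ s) (hxp : x < p) (hpy : p < y) (hpq : p + q = x + y) :
    f p + f q < f x + f y := by
  have hxy : 0 < y - x := sub_pos.2 (hxp.trans hpy)
  have ha : 0 < (y - p) / (y - x) := div_pos (sub_pos.2 hpy) hxy
  have hb : 0 < (p - x) / (y - x) := div_pos (sub_pos.2 hxp) hxy
  have hab : (y - p) / (y - x) + (p - x) / (y - x) = 1 := by field_simp; ring
  have hp : ((y - p) / (y - x)) • x + ((p - x) / (y - x)) • y = p := by
    simp only [smul_eq_mul]; field_simp; ring
  have hq : ((p - x) / (y - x)) • x + ((y - p) / (y - x)) • y = q := by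
    rw [eq_sub_of_add_eq' hpq]; simp only [smul_eq_mul]; field_simp; ring
  have hfp := hf.2 hx hy (hxp.trans hpy).ne ha hb hab
  have hfq := hf.2 hx hy (hxp.trans hpy).ne hb ha ((add_comm _ _).trans hab)
  calc f p + f q < _ := add_lt_add (hp ▸ hfp) (hq ▸ hfq)
    _ = f x + f y := by
      rw [add_add_add_comm, ← add_smul, ← add_smul, hab, add_comm ((p - x) / _), hab, one_smul,
        one_smul]

theorem strictConvexOn_sq_add_rpow {c p : ℝ} (hc : 0 ≤ c) (hp : 1 ≤ p) :
    StrictConvexOn ℝ univ fun t : ℝ => (t ^ 2 + c) ^ p := by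
  have himage : (fun t : ℝ => t ^ 2 + c) '' univ = Ici c := by
    ext s
    refine ⟨fun ⟨t, _, hts⟩ => hts ▸ le_add_of_nonneg_left (sq_nonneg t), fun hs => ?_⟩
    refine ⟨√(s - c), trivial, ?_⟩
    simp only [Real.sq_sqrt (sub_nonneg.2 hs), sub_add_cancel]
  have hsq : StrictConvexOn ℝ univ fun t : ℝ => t ^ 2 + c :=
    (Even.strictConvexOn_pow even_two two_ne_zero).add_const c
  have hc' : Ici c ⊆ Ici 0 := Ici_subset_Ici.2 hc
  have hrpow : ConvexOn ℝ (Ici c) fun s : ℝ => s ^ p :=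
    (convexOn_rpow hp).subset hc' (convex_Ici c)
  have hmono : StrictMonoOn (fun s : ℝ => s ^ p) (Ici c) :=
    (Real.strictMonoOn_rpow_Ici_of_exponent_pos (by linarith)).mono hc'
  exact (himage ▸ hrpow).comp_strictConvexOn hsq (himage ▸ hmono)

theorem EuclideanSpace.norm_sub_vec2_pow_three (a b c d : ℝ) :
    ‖!₂[a, b] - !₂[c, d]‖ ^ 3 = ((b - d) ^ 2 + (a - c) ^ 2) ^ (3 / 2 : ℝ) := by
  rw [← dist_eq_norm, EuclideanSpace.dist_eq, Real.sqrt_eq_rpow, ← Real.rpow_natCast,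
    ← Real.rpow_mul (by positivity)]
  norm_num [Fin.sum_univ_two, Real.dist_eq, sq_abs, add_comm]

theorem stmt_12_general (xa y0 ya yb C : ℝ) (hy0 : 0 < y0)
    (hab : yb < ya) (hC : 0 < C) :
    let Pa : EuclideanSpace ℝ (Fin 2) := (!₂[0, ya] : EuclideanSpace ℝ (Fin 2))
    let Pb : EuclideanSpace ℝ (Fin 2) := (!₂[0, yb] : EuclideanSpace ℝ (Fin 2))
    let Pa' : EuclideanSpace ℝ (Fin 2) := (!₂[xa, y0] : EuclideanSpace ℝ (Fin 2))
    let Pb' : EuclideanSpace ℝ (Fin 2) := (!₂[xa, 0] : EuclideanSpace ℝ (Fin 2))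
    C * (‖Pa' - Pa‖ ^ 3 + ‖Pb' - Pb‖ ^ 3)
      < C * (‖Pb' - Pa‖ ^ 3 + ‖Pa' - Pb‖ ^ 3) := by
  intro Pa Pb Pa' Pb'
  have key := (strictConvexOn_sq_add_rpow (sq_nonneg (xa - 0)) (by norm_num : (1 : ℝ) ≤ 3 / 2))
    |>.map_add_map_lt_of_add_eq (x := 0 - ya) (y := y0 - yb) (p := y0 - ya) (q := 0 - yb)
      trivial trivial (by linarith) (by linarith) (by ring)
  simp only [Pa, Pb, Pa', Pb', EuclideanSpace.norm_sub_vec2_pow_three]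
  exact mul_lt_mul_of_pos_left (by linarith) hC

theorem stmt_12 (xa y0 ya yb C : ℝ) (hxa : 0 < xa) (hy0 : 0 < y0)
    (hab : yb < ya) (hC : 0 < C) :
    let Pa : EuclideanSpace ℝ (Fin 2) := (!₂[0, ya] : EuclideanSpace ℝ (Fin 2))
    let Pb : EuclideanSpace ℝ (Fin 2) := (!₂[0, yb] : EuclideanSpace ℝ (Fin 2))
    let Pa' : EuclideanSpace ℝ (Fin 2) := (!₂[xa, y0] : EuclideanSpace ℝ (Fin 2))
    let Pb' : EuclideanSpace ℝ (Fin 2) := (!₂[xa, 0] : EuclideanSpace ℝ (Fin 2))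
    C * (‖Pa' - Pa‖ ^ 3 + ‖Pb' - Pb‖ ^ 3)
      < C * (‖Pb' - Pa‖ ^ 3 + ‖Pa' - Pb‖ ^ 3) :=
  stmt_12_general xa y0 ya yb C hy0 hab hC
end
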